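/- arXiv:1304.2051 — 5 statements merged into one kernel-verified Lean document; each statement's English description precedes it below -/
import Mathlib

section
/- Let $(M,\omega)$ be a premultisymplectic manifold ($\omega$ a closed $(n+1)$-form), and let $v_1,\ldots,v_m$ be local Hamiltonian vector fields with $m \geq 2$. Then $d\,\iota(v_1\wedge\cdots\wedge v_m)\omega = (-1)^m \sum_{1\leq i<j\leq m} (-1)^{i+j} \iota([v_i,v_j]\wedge v_1\wedge\cdots\wedge \hat v_i\wedge\cdots\wedge\hat v_j\wedge\cdots\wedge v_m)\omega$. -/
open scoped BigOperators

/-- An abstract model of the Cartan calculus of differential forms on a manifold-like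
object `M`: `X` plays the role of the Lie algebra of vector fields, `Ω` of the (total)
space of differential forms, `grade k` of the space of `k`-forms, `d` of the de Rham
differential, `ι v` of contraction with the vector field `v`, `ev p` of evaluation of a
`0`-form (function) at the point `p`, and `const` of the constant functions.  The axioms
are the standard identities of the Cartan calculus. -/
structure CartanCalculus (M X Ω : Type*) [LieRing X] [LieAlgebra ℝ X]
    [AddCommGroup Ω] [Module ℝ Ω] where
  grade : ℤ → Submodule ℝ Ω
  grade_neg : ∀ k : ℤ, k < 0 → grade k = ⊥
  d : Ω →ₗ[ℝ] Ω
  ι : X →ₗ[ℝ] Ω →ₗ[ℝ] Ω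
  ev : M → Ω →ₗ[ℝ] ℝ
  const : ℝ →ₗ[ℝ] Ω
  const_grade : ∀ r, const r ∈ grade 0
  d_const : ∀ r, d (const r) = 0
  ι_const : ∀ v r, ι v (const r) = 0
  d_grade : ∀ (k : ℤ) (α : Ω), α ∈ grade k → d α ∈ grade (k + 1)
  ι_grade : ∀ (v : X) (k : ℤ) (α : Ω), α ∈ grade k → ι v α ∈ grade (k - 1)
  d_d : ∀ α, d (d α) = 0
  ι_ι : ∀ v w α, ι v (ι w α) = - ι w (ι v α)
  ι_bracket : ∀ v w α,
    ι ⁅v, w⁆ α =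
      d (ι v (ι w α)) + ι v (d (ι w α)) - ι w (d (ι v α)) - ι w (ι v (d α))

namespace CartanCalculus

variable {M X Ω : Type*} [LieRing X] [LieAlgebra ℝ X] [AddCommGroup Ω] [Module ℝ Ω]

/-- The Lie derivative `L_v = d ∘ ι_v + ι_v ∘ d` (Cartan's magic formula). -/
def lie (C : CartanCalculus M X Ω) (v : X) : Ω →ₗ[ℝ] Ω :=
  C.d ∘ₗ C.ι v + C.ι v ∘ₗ C.d

/-- Iterated contraction `ι(v₁ ∧ ⋯ ∧ v_k) α = ι_{v_k} ⋯ ι_{v₁} α`. -/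
def contr (C : CartanCalculus M X Ω) : (k : ℕ) → (Fin k → X) → Ω → Ω
  | 0, _, α => α
  | k + 1, v, α => contr C k (fun a => v a.succ) (C.ι (v 0) α)

end CartanCalculus

/-- The sign `ς(k) = -(-1)^{k(k+1)/2}` from the paper. -/
def sigmaSign (k : ℕ) : ℝ := -(-1 : ℝ) ^ (k * (k + 1) / 2)

/-- Remove the `i`-th entry of a tuple. -/
def rmNth {α : Type*} {n : ℕ} (i : Fin (n + 1)) (x : Fin (n + 1) → α) : Fin n → α :=
  fun a => x (i.succAbove a)

/-- Remove the entries in positions `i < j` of a tuple. -/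
def rm2 {α : Type*} {m : ℕ} (x : Fin (m + 2) → α) (i j : Fin (m + 2)) : Fin m → α :=
  rmNth ⟨(j : ℕ) - 1, by have := j.isLt; omega⟩ (rmNth i x)

namespace CartanCalculus

variable {M X Ω : Type*} [LieRing X] [LieAlgebra ℝ X] [AddCommGroup Ω] [Module ℝ Ω]
  (C : CartanCalculus M X Ω)

/-- `contr` as a linear map. -/
def contrL : (k : ℕ) → (Fin k → X) → Ω →ₗ[ℝ] Ω
  | 0, _ => LinearMap.id
  | k + 1, v => contrL k (fun a => v a.succ) ∘ₗ C.ι (v 0)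

lemma contr_eq (k : ℕ) (v : Fin k → X) (α : Ω) : C.contr k v α = C.contrL k v α := by
  induction k generalizing α with
  | zero => rfl
  | succ k ih => simp [contr, contrL, ih]

lemma contr_cons (k : ℕ) (w : X) (u : Fin k → X) (β : Ω) :
    C.contr (k + 1) (Fin.cons w u) β = C.contr k u (C.ι w β) := by
  simp only [contr, Fin.cons_zero, Fin.cons_succ]

lemma lie_ι (w u : X) (α : Ω) :
    C.lie w (C.ι u α) = C.ι u (C.lie w α) + C.ι ⁅w, u⁆ α := by
  rw [C.ι_bracket]
  simp only [lie, LinearMap.add_apply, LinearMap.comp_apply, map_add]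
  abel

lemma d_ι (v : X) (α : Ω) : C.d (C.ι v α) = C.lie v α - C.ι v (C.d α) := by
  simp only [lie, LinearMap.add_apply, LinearMap.comp_apply]
  abel

end CartanCalculus

lemma rmNth_zero {α : Type*} {n : ℕ} (v : Fin (n + 1) → α) :
    rmNth 0 v = fun a => v a.succ := by
  funext a; simp [rmNth, Fin.zero_succAbove]

lemma rmNth_succ {α : Type*} {n : ℕ} (k : Fin (n + 1)) (v : Fin (n + 2) → α) :
    rmNth k.succ v = Fin.cons (v 0) (rmNth k fun a => v a.succ) := by
  funext a
  refine Fin.cases ?_ (fun b => ?_) a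
  · simp [rmNth, Fin.succ_succAbove_zero]
  · simp [rmNth, Fin.succ_succAbove_succ]

lemma rmNth_succ_cons {α : Type*} {n : ℕ} (t : Fin (n + 1)) (a : α) (w : Fin (n + 1) → α) :
    rmNth t.succ (Fin.cons a w) = Fin.cons a (rmNth t w) := by
  funext b
  refine Fin.cases ?_ (fun c => ?_) b
  · simp [rmNth, Fin.succ_succAbove_zero]
  · simp [rmNth, Fin.succ_succAbove_succ]

lemma rm2_zero_succ {α : Type*} {n : ℕ} (v : Fin (n + 2) → α) (k : Fin (n + 1)) :
    rm2 v 0 k.succ = rmNth k fun a => v a.succ := by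
  unfold rm2
  rw [rmNth_zero]
  congr 1

lemma rm2_succ_succ {α : Type*} {n : ℕ} (v : Fin (n + 3) → α) (i j : Fin (n + 2))
    (hj : j ≠ 0) :
    rm2 v i.succ j.succ = Fin.cons (v 0) (rm2 (fun a => v a.succ) i j) := by
  obtain ⟨q, rfl⟩ : ∃ q : Fin (n + 1), j = q.succ := ⟨j.pred hj, (Fin.succ_pred j hj).symm⟩
  show rmNth (Fin.succ ⟨(q : ℕ), by omega⟩) (rmNth i.succ v) = _
  rw [rmNth_succ i v, rmNth_succ_cons]
  rfl

lemma pair_sum {N : ℕ} {A : Type*} [AddCommMonoid A] (g : Fin (N + 1) → Fin (N + 1) → A) :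
    ∑ p ∈ Finset.filter (fun p : Fin (N + 1) × Fin (N + 1) => p.1 < p.2) Finset.univ, g p.1 p.2
      = (∑ j : Fin N, g 0 j.succ)
        + ∑ p ∈ Finset.filter (fun p : Fin N × Fin N => p.1 < p.2) Finset.univ,
            g p.1.succ p.2.succ := by
  rw [Finset.sum_filter, Finset.sum_filter]
  rw [Fintype.sum_prod_type, Fintype.sum_prod_type]
  rw [Fin.sum_univ_succ]
  simp [Fin.sum_univ_succ, Fin.succ_lt_succ_iff, Fin.succ_pos, Fin.not_lt_zero]

lemma neg_one_pow_congr_mod2 {a b : ℕ} (h : a % 2 = b % 2) : ((-1 : ℝ)) ^ a = (-1 : ℝ) ^ b := by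
  rcases Nat.even_or_odd a with ha | ha
  · have hb : Even b := by
      rw [Nat.even_iff] at ha ⊢; omega
    rw [ha.neg_one_pow, hb.neg_one_pow]
  · have hb : Odd b := by
      rw [Nat.odd_iff] at ha ⊢; omega
    rw [ha.neg_one_pow, hb.neg_one_pow]

namespace CartanCalculus

variable {M X Ω : Type*} [LieRing X] [LieAlgebra ℝ X] [AddCommGroup Ω] [Module ℝ Ω]
  (C : CartanCalculus M X Ω)

lemma contr_add (k : ℕ) (v : Fin k → X) (α β : Ω) :
    C.contr k v (α + β) = C.contr k v α + C.contr k v β := by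
  simp [contr_eq, map_add]

lemma contr_neg (k : ℕ) (v : Fin k → X) (α : Ω) :
    C.contr k v (-α) = -C.contr k v α := by
  simp [contr_eq, map_neg]

lemma contr_sub (k : ℕ) (v : Fin k → X) (α β : Ω) :
    C.contr k v (α - β) = C.contr k v α - C.contr k v β := by
  simp [contr_eq, map_sub]

lemma contr_zero (k : ℕ) (v : Fin k → X) : C.contr k v 0 = 0 := by
  simp [contr_eq, map_zero]

end CartanCalculus

namespace CartanCalculus

variable {M X Ω : Type*} [LieRing X] [LieAlgebra ℝ X] [AddCommGroup Ω] [Module ℝ Ω]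
  (C : CartanCalculus M X Ω)

lemma keyG : ∀ (m : ℕ) (v : Fin (m + 2) → X) (α : Ω),
    C.d (C.contr (m + 2) v α) =
      (∑ k : Fin (m + 2),
        ((-1 : ℝ) ^ (m + 1 + (k : ℕ))) • C.contr (m + 1) (rmNth k v) (C.lie (v k) α))
      + (∑ p ∈ Finset.filter (fun p : Fin (m + 2) × Fin (m + 2) => p.1 < p.2) Finset.univ,
          ((-1 : ℝ) ^ (m + (p.1 : ℕ) + (p.2 : ℕ))) •
            C.contr (m + 1) (Fin.cons ⁅v p.1, v p.2⁆ (rm2 v p.1 p.2)) α)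
      + ((-1 : ℝ) ^ m) • C.contr (m + 2) v (C.d α) := by
  intro m
  induction m with
  | zero =>
    intro v α
    have hc : ∀ β : Ω, C.contr 2 v β = C.ι (v 1) (C.ι (v 0) β) := fun β => rfl
    have hr0 : rmNth (0 : Fin 2) v 0 = v 1 := rfl
    have hr1 : rmNth (1 : Fin 2) v 0 = v 0 := rfl
    have hc1 : ∀ (u : Fin 1 → X) (β : Ω), C.contr 1 u β = C.ι (u 0) β := fun _ _ => rfl
    rw [hc, hc, Fin.sum_univ_two,
      pair_sum (fun i j => ((-1 : ℝ) ^ (0 + (i : ℕ) + (j : ℕ))) •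
        C.contr (0 + 1) (Fin.cons ⁅v i, v j⁆ (rm2 v i j)) α)]
    have hempty : Finset.filter (fun p : Fin 1 × Fin 1 => p.1 < p.2) Finset.univ = ∅ := by
      decide
    rw [hempty, Finset.sum_empty, Fin.sum_univ_one]
    rw [hc1, hc1, hc1, hr0, hr1]
    have hsucc0 : ((0 : Fin 1).succ : Fin 2) = 1 := rfl
    rw [hsucc0]
    have hcons : (Fin.cons ⁅v 0, v 1⁆ (rm2 v 0 1) : Fin 1 → X) 0 = ⁅v 0, v 1⁆ := rfl
    rw [hcons]
    norm_num
    rw [C.ι_bracket (v 0) (v 1) α]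
    simp only [lie, LinearMap.add_apply, LinearMap.comp_apply, map_add, map_sub, map_neg]
    rw [C.ι_ι (v 0) (v 1) α, C.ι_ι (v 0) (v 1) (C.d α)]
    simp only [map_neg]
    abel
  | succ m ih =>
    intro v α
    have h0 : C.contr (m + 3) v α = C.contr (m + 2) (fun a => v a.succ) (C.ι (v 0) α) := rfl
    rw [h0, ih]
    rw [Fin.sum_univ_succ (fun k : Fin (m + 3) =>
      ((-1 : ℝ) ^ (m + 1 + 1 + (k : ℕ))) • C.contr (m + 2) (rmNth k v) (C.lie (v k) α))]
    rw [pair_sum (fun i j : Fin (m + 3) =>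
      ((-1 : ℝ) ^ (m + 1 + (i : ℕ) + (j : ℕ))) •
        C.contr (m + 2) (Fin.cons ⁅v i, v j⁆ (rm2 v i j)) α)]
    have hS1 : ∑ k : Fin (m + 2),
          (-1 : ℝ) ^ (m + 1 + (k : ℕ)) •
            C.contr (m + 1) (rmNth k fun a => v a.succ) (C.lie (v k.succ) (C.ι (v 0) α))
        = (∑ i : Fin (m + 2),
            (-1 : ℝ) ^ (m + 1 + 1 + ((i.succ : Fin (m + 3)) : ℕ)) •
              C.contr (m + 2) (rmNth i.succ v) (C.lie (v i.succ) α))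
          + ∑ j : Fin (m + 2),
              (-1 : ℝ) ^ (m + 1 + ((0 : Fin (m + 3)) : ℕ) + ((j.succ : Fin (m + 3)) : ℕ)) •
                C.contr (m + 2) (Fin.cons ⁅v 0, v j.succ⁆ (rm2 v 0 j.succ)) α := by
      rw [← Finset.sum_add_distrib]
      refine Finset.sum_congr rfl fun k _ => ?_
      rw [C.lie_ι (v k.succ) (v 0) α, C.contr_add, smul_add]
      congr 1
      · rw [rmNth_succ k v, C.contr_cons]
        congr 1
        exact neg_one_pow_congr_mod2 (by simp [Fin.val_succ]; omega)
      · rw [rm2_zero_succ v k, C.contr_cons]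
        rw [show (⁅v k.succ, v 0⁆ : X) = -⁅v 0, v k.succ⁆ from
          neg_eq_iff_eq_neg.mp (lie_skew (v 0) (v k.succ))]
        rw [map_neg, LinearMap.neg_apply, C.contr_neg, smul_neg, ← neg_smul]
        congr 1
        rw [show -((-1 : ℝ) ^ (m + 1 + (k : ℕ))) = (-1 : ℝ) ^ (m + 1 + (k : ℕ) + 1) by
          rw [pow_succ]; ring]
        exact neg_one_pow_congr_mod2 (by simp [Fin.val_succ]; omega)
    have hS2 : ∑ p ∈ Finset.filter (fun p : Fin (m + 2) × Fin (m + 2) => p.1 < p.2) Finset.univ,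
          (-1 : ℝ) ^ (m + (p.1 : ℕ) + (p.2 : ℕ)) •
            C.contr (m + 1)
              (Fin.cons ⁅v p.1.succ, v p.2.succ⁆ (rm2 (fun a => v a.succ) p.1 p.2))
              (C.ι (v 0) α)
        = ∑ p ∈ Finset.filter (fun p : Fin (m + 2) × Fin (m + 2) => p.1 < p.2) Finset.univ,
            (-1 : ℝ) ^ (m + 1 + ((p.1.succ : Fin (m + 3)) : ℕ) + ((p.2.succ : Fin (m + 3)) : ℕ)) •
              C.contr (m + 2) (Fin.cons ⁅v p.1.succ, v p.2.succ⁆ (rm2 v p.1.succ p.2.succ)) α := by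
      refine Finset.sum_congr rfl fun p hp => ?_
      have hlt : p.1 < p.2 := (Finset.mem_filter.mp hp).2
      have hne : p.2 ≠ 0 := Fin.pos_iff_ne_zero.mp (lt_of_le_of_lt (Fin.zero_le _) hlt)
      rw [rm2_succ_succ v p.1 p.2 hne]
      rw [C.contr_cons, C.contr_cons, C.contr_cons]
      rw [C.ι_ι ⁅v p.1.succ, v p.2.succ⁆ (v 0) α, C.contr_neg, smul_neg, ← neg_smul]
      congr 1
      rw [show -((-1 : ℝ) ^ (m + (p.1 : ℕ) + (p.2 : ℕ)))
          = (-1 : ℝ) ^ (m + (p.1 : ℕ) + (p.2 : ℕ) + 1) by rw [pow_succ]; ring]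
      exact neg_one_pow_congr_mod2 (by simp [Fin.val_succ]; omega)
    have hS3 : (-1 : ℝ) ^ m • C.contr (m + 2) (fun a => v a.succ) (C.d (C.ι (v 0) α))
        = (-1 : ℝ) ^ (m + 1 + 1 + ((0 : Fin (m + 3)) : ℕ)) •
            C.contr (m + 2) (rmNth (0 : Fin (m + 3)) v) (C.lie (v 0) α)
          + (-1 : ℝ) ^ (m + 1) • C.contr (m + 1 + 2) v (C.d α) := by
      rw [C.d_ι (v 0) α, C.contr_sub, smul_sub, rmNth_zero v]
      rw [show ((-1 : ℝ) ^ (m + 1 + 1 + ((0 : Fin (m + 3)) : ℕ))) = (-1 : ℝ) ^ m from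
        neg_one_pow_congr_mod2 (by simp; omega)]
      rw [show C.contr (m + 1 + 2) v (C.d α)
          = C.contr (m + 2) (fun a => v a.succ) (C.ι (v 0) (C.d α)) from rfl]
      rw [sub_eq_add_neg]
      congr 1
      rw [← neg_smul]
      congr 1
      rw [pow_succ]; ring
    rw [hS1, hS2, hS3]
    abel

end CartanCalculus


/-- (Lemma 7.5 of the paper.)  For local Hamiltonian vector fields
`v₁, …, v_m` (`m ≥ 2`, encoded as `m + 2` fields below) on a premultisymplectic manifold
`(M, ω)` one has
`d ι(v₁∧⋯∧v_m) ω = (-1)^m ∑_{i<j} (-1)^{i+j} ι([v_i,v_j] ∧ v₁ ∧ ⋯ v̂_i ⋯ v̂_j ⋯ ∧ v_m) ω`.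
(Indices here are `0`-based; this does not change the parity of `i + j`.) -/
theorem statement3 {M X Ω : Type*} [LieRing X] [LieAlgebra ℝ X]
    [AddCommGroup Ω] [Module ℝ Ω] (C : CartanCalculus M X Ω)
    (n : ℕ) (ω : Ω) (hω : ω ∈ C.grade ((n : ℤ) + 1)) (hclosed : C.d ω = 0)
    (m : ℕ) (v : Fin (m + 2) → X) (hv : ∀ i, C.lie (v i) ω = 0) :
    C.d (C.contr (m + 2) v ω) =
      (-1 : ℝ) ^ (m + 2) •
        ∑ p ∈ Finset.filter (fun p : Fin (m + 2) × Fin (m + 2) => p.1 < p.2) Finset.univ,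
          ((-1 : ℝ) ^ ((p.1 : ℕ) + (p.2 : ℕ))) •
            C.contr (m + 1) (Fin.cons ⁅v p.1, v p.2⁆ (rm2 v p.1 p.2)) ω := by
  have h := C.keyG m v ω
  rw [hclosed, C.contr_zero, smul_zero, add_zero] at h
  rw [Finset.sum_congr rfl (fun k _ => by
    rw [hv k, C.contr_zero, smul_zero] :
    ∀ k ∈ (Finset.univ : Finset (Fin (m + 2))),
      ((-1 : ℝ) ^ (m + 1 + (k : ℕ))) • C.contr (m + 1) (rmNth k v) (C.lie (v k) ω)
        = 0), Finset.sum_const_zero, zero_add] at h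
  rw [h, Finset.smul_sum]
  refine Finset.sum_congr rfl fun p _ => ?_
  rw [smul_smul, ← pow_add]
  congr 1
  exact neg_one_pow_congr_mod2 (by omega)
end

section
/- Let a Lie algebra $\mathfrak{g}$ with $[\mathfrak{g},\mathfrak{g}]=\mathfrak{g}$ act on a premultisymplectic manifold $(M,\omega)$ (with $\omega$ a closed $(n+1)$-form, $n\geq 2$) by local Hamiltonian vector fields $x\mapsto v_x$. Then there exists a linear map $\mu:\mathfrak{g}\to\Omega^{n-1}(M)$ such that $d\mu(x) = -\iota_{v_x}\omega$ for all $x\in\mathfrak{g}$; in particular, every $v_x$ is Hamiltonian. -/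
open scoped BigOperators

set_option synthInstance.maxHeartbeats 1000000 in
/-- If a Lie algebra `𝔤` with `[𝔤,𝔤] = 𝔤` acts on a premultisymplectic
manifold `(M, ω)` (ω a closed `(n+1)`-form, `n ≥ 2`) by local Hamiltonian vector fields
`x ↦ v_x`, then there is a linear map `μ : 𝔤 → Ω^{n-1}(M)` with `d μ(x) = - ι_{v_x} ω`
for all `x`; in particular every `v_x` is Hamiltonian. -/
theorem statement6 {M X Ω g : Type*} [LieRing X] [LieAlgebra ℝ X]
    [AddCommGroup Ω] [Module ℝ Ω] [LieRing g] [LieAlgebra ℝ g]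
    (C : CartanCalculus M X Ω) (n : ℕ) (hn : 2 ≤ n)
    (ω : Ω) (hω : ω ∈ C.grade ((n : ℤ) + 1)) (hclosed : C.d ω = 0)
    (ρ : g →ₗ⁅ℝ⁆ X) (hρ : ∀ x, C.lie (ρ x) ω = 0)
    (hperf : ∀ x : g, x ∈ Submodule.span ℝ {z : g | ∃ a b : g, z = ⁅a, b⁆}) :
    ∃ μ : g →ₗ[ℝ] Ω, ∀ x : g,
      μ x ∈ C.grade ((n : ℤ) - 1) ∧ C.d (μ x) = - C.ι (ρ x) ω := by
  classical
  set V := C.grade ((n : ℤ) - 1) with hV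
  set D : V →ₗ[ℝ] Ω := C.d ∘ₗ V.subtype with hD
  set W := LinearMap.range D with hW
  obtain ⟨s, hs⟩ := (D.rangeRestrict).exists_rightInverse_of_surjective
    (LinearMap.range_eq_top.mpr (LinearMap.surjective_rangeRestrict D))
  set T : g →ₗ[ℝ] Ω := -((C.ι.flip ω).comp ρ.toLinearMap) with hT
  have hTapp : ∀ x : g, T x = - C.ι (ρ x) ω := fun x => rfl
  have hdι : ∀ v : X, C.lie v ω = 0 → C.d (C.ι v ω) = 0 := by
    intro v h
    have h' : C.d (C.ι v ω) + C.ι v (C.d ω) = 0 := h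
    simpa [hclosed] using h'
  have hTW : ∀ x : g, T x ∈ W := by
    intro x
    have hle : Submodule.span ℝ {z : g | ∃ a b : g, z = ⁅a, b⁆} ≤ Submodule.comap T W := by
      rw [Submodule.span_le]
      rintro z ⟨a, b, rfl⟩
      show T ⁅a, b⁆ ∈ W
      have hv0 : -(C.ι (ρ a) (C.ι (ρ b) ω)) ∈ V := by
        apply neg_mem
        have h1 := C.ι_grade (ρ b) _ ω hω
        have h2 := C.ι_grade (ρ a) _ _ h1
        have : (n : ℤ) + 1 - 1 - 1 = (n : ℤ) - 1 := by ring
        rwa [this] at h2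
      have key : T ⁅a, b⁆ = D ⟨-(C.ι (ρ a) (C.ι (ρ b) ω)), hv0⟩ := by
        have hb := C.ι_bracket (ρ a) (ρ b) ω
        have hda : C.d (C.ι (ρ a) ω) = 0 := hdι _ (hρ a)
        have hdb : C.d (C.ι (ρ b) ω) = 0 := hdι _ (hρ b)
        have h0 : C.ι ⁅ρ a, ρ b⁆ ω = C.d (C.ι (ρ a) (C.ι (ρ b) ω)) := by
          rw [hb, hda, hdb, hclosed]; simp
        rw [hTapp, ρ.map_lie, h0]
        show _ = C.d (V.subtype ⟨_, _⟩)
        simp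
      rw [key]
      exact LinearMap.mem_range_self D _
    exact hle (hperf x)
  refine ⟨V.subtype ∘ₗ s ∘ₗ (T.codRestrict W hTW), fun x => ?_⟩
  constructor
  · exact (s ((T.codRestrict W hTW) x)).2
  · have hsy : ∀ y : W, D (s y) = (y : Ω) := by
      intro y
      have h2 : D.rangeRestrict (s y) = y := by exact LinearMap.congr_fun hs y
      calc D (s y) = (D.rangeRestrict (s y) : Ω) := rfl
        _ = (y : Ω) := by rw [h2]
    have : C.d ((V.subtype ∘ₗ s ∘ₗ (T.codRestrict W hTW)) x) = T x := by
      simpa [hD] using hsy ((T.codRestrict W hTW) x)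
    rw [this, hTapp]
end

section
/- Let $\mathfrak{g}$ be a Lie algebra and $c : \Lambda^{n+1}\mathfrak{g} \to \mathbb{R}$ a Chevalley-Eilenberg $(n+1)$-cocycle. Then the graded vector space $L$ with $L^0 = \mathfrak{g}$, $L^{1-n} = \mathbb{R}$, and zero otherwise, equipped with brackets $l_2(x,y) = [x,y]$ for $x,y\in\mathfrak{g}$, $l_{n+1}(x_1,\ldots,x_{n+1}) = c(x_1,\ldots,x_{n+1})$ for $x_i\in\mathfrak{g}$, and all other brackets zero, is an $L_\infty$-algebra (Lie $n$-algebra), i.e., satisfies the generalized Jacobi identities. -/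
open scoped BigOperators

noncomputable section

/-- A `(i, m-i)`-unshuffle: a permutation which is increasing on the first `i`
positions and on the last `m - i` positions. -/
abbrev IsUnshuffle (m i : ℕ) (σ : Equiv.Perm (Fin m)) : Prop :=
  (∀ a b : Fin m, (a : ℕ) < (b : ℕ) → (b : ℕ) < i → σ a < σ b) ∧
  (∀ a b : Fin m, i ≤ (a : ℕ) → (a : ℕ) < (b : ℕ) → σ a < σ b)

/-- The multibrackets of the central `n`-extension `ĝ_c` of a Lie algebra `g` by a
Chevalley–Eilenberg `(n+1)`-cocycle `c`.  The underlying graded vector space is `g` in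
degree `0` and `ℝ` in degree `1-n` (encoded as the product `g × ℝ`); the only nonzero
brackets are `l₂(x, y) = [x, y]` and `l_{n+1}(x₁, …, x_{n+1}) = c(x₁, …, x_{n+1})` on
degree-`0` elements.  (Brackets with any input of nonzero `ℝ`-component vanish.) -/
def lBr {g : Type*} [LieRing g] [LieAlgebra ℝ g] (n : ℕ)
    (c : AlternatingMap ℝ g ℝ (Fin (n + 1))) :
    (k : ℕ) → (Fin k → g × ℝ) → g × ℝ
  | 2, v => (⁅(v 0).1, (v 1).1⁆, (0 : ℝ))
  | k, v => if h : k = n + 1 then ((0 : g), c fun a => (v (Fin.cast h.symm a)).1) else 0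

section aux
variable {g : Type*} [LieRing g] [LieAlgebra ℝ g] {n : ℕ} (c : AlternatingMap ℝ g ℝ (Fin (n + 1)))

lemma lBr_two (v : Fin 2 → g × ℝ) : lBr n c 2 v = (⁅(v 0).1, (v 1).1⁆, (0 : ℝ)) := rfl

lemma lBr_ne_two (k : ℕ) (hk : k ≠ 2) (v : Fin k → g × ℝ) :
    lBr n c k v = if h : k = n + 1 then ((0 : g), c fun a => (v (Fin.cast h.symm a)).1) else 0 := by
  match k, hk with
  | 0, _ => rfl
  | 1, _ => rfl
  | (k+3), _ => rfl

lemma lBr_zero (k : ℕ) (hk : k ≠ 2) (hkn : k ≠ n + 1) (v : Fin k → g × ℝ) :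
    lBr n c k v = 0 := by rw [lBr_ne_two c k hk v, dif_neg hkn]

lemma lBr_succ_n (hn : n ≠ 1) (v : Fin (n + 1) → g × ℝ) :
    lBr n c (n + 1) v = ((0 : g), c fun a => (v a).1) := by
  rw [lBr_ne_two c (n+1) (by omega) v, dif_pos rfl]
  congr 1

lemma lBr_fst (k : ℕ) (hk : k ≠ 2) (v : Fin k → g × ℝ) : (lBr n c k v).1 = 0 := by
  rw [lBr_ne_two c k hk v]
  split <;> simp

lemma lBr_cons_fst_zero (k : ℕ) (w : g × ℝ) (rest : Fin k → g × ℝ) (hw : w.1 = 0) :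
    lBr n c (k + 1) (Fin.cons w rest) = 0 := by
  match k with
  | 1 => rw [lBr_two]; simp [hw]
  | 0 =>
    rw [lBr_ne_two c 1 (by omega)]
    split
    · rename_i h
      have h0 : (Fin.cast h.symm (0 : Fin (n+1))) = (0 : Fin 1) := by
        ext; simp
      have : ((Fin.cons w rest : Fin 1 → g × ℝ) (Fin.cast h.symm (0 : Fin (n+1)))).1 = 0 := by
        rw [h0]; simpa using hw
      ext
      · simp
      · simp only [Prod.snd_zero]
        exact AlternatingMap.map_coord_zero c 0 this
    · rfl
  | (k+2) =>
    rw [lBr_ne_two c (k+3) (by omega)]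
    split
    · rename_i h
      have h0 : (Fin.cast h.symm (0 : Fin (n+1))) = (0 : Fin (k+3)) := by
        ext; simp
      have : ((Fin.cons w rest : Fin (k+3) → g × ℝ) (Fin.cast h.symm (0 : Fin (n+1)))).1 = 0 := by
        rw [h0]; simpa using hw
      ext
      · simp
      · simp only [Prod.snd_zero]
        exact AlternatingMap.map_coord_zero c 0 this
    · rfl

end aux

section perm

/-- second index used in `unsh`. -/
def q1 {m : ℕ} (q : Fin (m + 2)) : Fin (m + 1) := ⟨(q : ℕ) - 1, by have := q.isLt; omega⟩

def unsh {m : ℕ} (p q : Fin (m + 2)) : Equiv.Perm (Fin (m + 2)) :=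
  (Fin.cycleRange p)⁻¹ * Equiv.Perm.decomposeFin.symm (0, (Fin.cycleRange (q1 q))⁻¹)

lemma unsh_zero {m : ℕ} (p q : Fin (m + 2)) : unsh p q 0 = p := by
  simp [unsh, Equiv.Perm.mul_apply, Equiv.Perm.decomposeFin_symm_apply_zero,
    (show ∀ (e : Equiv.Perm (Fin (m+2))), e⁻¹ = e.symm from fun _ => rfl),
    Fin.cycleRange_symm_zero]

lemma unsh_succ {m : ℕ} (p q : Fin (m + 2)) (a : Fin (m + 1)) :
    unsh p q a.succ = p.succAbove ((Fin.cycleRange (q1 q)).symm a) := by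
  simp [unsh, Equiv.Perm.mul_apply, Equiv.Perm.decomposeFin_symm_apply_succ,
    (show ∀ k (e : Equiv.Perm (Fin k)), e⁻¹ = e.symm from fun _ _ => rfl),
    Fin.cycleRange_symm_succ]

lemma unsh_one {m : ℕ} (p q : Fin (m + 2)) (hpq : p < q) : unsh p q 1 = q := by
  have h0 : (1 : Fin (m + 2)) = (0 : Fin (m+1)).succ := rfl
  rw [h0, unsh_succ, Fin.cycleRange_symm_zero]
  have hq : (q : ℕ) ≠ 0 := by
    intro h; exact absurd hpq (by simp [Fin.lt_def, h])
  rw [Fin.succAbove_of_le_castSucc]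
  · ext; simp [q1, Fin.val_succ]; omega
  · rw [Fin.le_castSucc_iff]; simp [Fin.lt_def, q1, Fin.val_succ]
    have := hpq; rw [Fin.lt_def] at this; omega

lemma unsh_two {m : ℕ} (p q : Fin (m + 2)) (a : Fin m) :
    unsh p q a.succ.succ = p.succAbove ((q1 q).succAbove a) := by
  rw [unsh_succ, Fin.cycleRange_symm_succ]

lemma sign_unsh {m : ℕ} (p q : Fin (m + 2)) :
    Equiv.Perm.sign (unsh p q) = (-1) ^ (p : ℕ) * (-1) ^ ((q : ℕ) - 1) := by
  rw [unsh, map_mul, Equiv.Perm.sign_inv, Fin.sign_cycleRange,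
    Equiv.Perm.decomposeFin.symm_sign, Equiv.Perm.sign_inv, Fin.sign_cycleRange]
  simp [q1]

lemma isUnshuffle_unsh {m : ℕ} (p q : Fin (m + 2)) (hpq : p < q) :
    IsUnshuffle (m + 2) 2 (unsh p q) := by
  constructor
  · intro a b hab hb2
    have ha : a = 0 := by ext; simp only [Fin.val_zero]; omega
    have hb : b = 1 := by ext; simp only [Fin.val_one]; omega
    rw [ha, hb, unsh_zero, unsh_one p q hpq]; exact hpq
  · intro a b h2a hab
    obtain ⟨a', rfl⟩ : ∃ a' : Fin m, a = a'.succ.succ :=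
      ⟨⟨(a : ℕ) - 2, by have := a.isLt; omega⟩, by ext; simp [Fin.val_succ]; omega⟩
    obtain ⟨b', rfl⟩ : ∃ b' : Fin m, b = b'.succ.succ :=
      ⟨⟨(b : ℕ) - 2, by have := b.isLt; omega⟩, by ext; simp [Fin.val_succ]; omega⟩
    rw [unsh_two, unsh_two]
    refine Fin.strictMono_succAbove _ (Fin.strictMono_succAbove _ ?_)
    simp only [Fin.lt_def, Fin.val_succ] at hab ⊢
    omega

lemma unshuffle_eq_unsh {m : ℕ} (σ : Equiv.Perm (Fin (m + 2)))
    (hσ : IsUnshuffle (m + 2) 2 σ) : σ = unsh (σ 0) (σ 1) := by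
  have hpq : σ 0 < σ 1 := hσ.1 0 1 (by simp) (by simp [Fin.val_one])
  set s : Finset (Fin (m + 2)) := Finset.univ \ {σ 0, σ 1} with hs
  have hcard : s.card = m := by
    rw [hs, Finset.card_sdiff_of_subset (by simp), Finset.card_univ, Fintype.card_fin,
      Finset.card_pair hpq.ne]
    omega
  have key : ∀ ρ : Equiv.Perm (Fin (m + 2)), IsUnshuffle (m + 2) 2 ρ → ρ 0 = σ 0 → ρ 1 = σ 1 →
      (fun a : Fin m => ρ a.succ.succ) = s.orderEmbOfFin hcard := by
    intro ρ hρ h0 h1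
    apply Finset.orderEmbOfFin_unique
    · intro a
      simp only [hs, Finset.mem_sdiff, Finset.mem_univ, Finset.mem_insert, Finset.mem_singleton,
        true_and]
      push_neg
      constructor
      · rw [← h0]; intro h
        have h2 := congrArg Fin.val (ρ.injective h)
        simp [Fin.val_succ] at h2
      · rw [← h1]; intro h
        have h2 := congrArg Fin.val (ρ.injective h)
        simp [Fin.val_succ, Fin.val_one] at h2
    · intro a b hab
      exact hρ.2 a.succ.succ b.succ.succ (by simp [Fin.val_succ]) (by simp [Fin.val_succ]; exact hab)
  have t1 := key σ hσ rfl rfl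
  have t2 := key (unsh (σ 0) (σ 1)) (isUnshuffle_unsh _ _ hpq) (unsh_zero _ _) (unsh_one _ _ hpq)
  apply Equiv.ext
  intro x
  rcases x with ⟨xv, hx⟩
  match xv, hx with
  | 0, hx => exact (unsh_zero (σ 0) (σ 1)).symm
  | 1, hx => exact (unsh_one (σ 0) (σ 1) hpq).symm
  | (a + 2), hx =>
    have hx' : (⟨a + 2, hx⟩ : Fin (m + 2)) = (⟨a, by omega⟩ : Fin m).succ.succ := by
      ext; simp [Fin.val_succ]
    rw [hx', funext_iff] at *
    rw [t1 ⟨a, by omega⟩, ← t2 ⟨a, by omega⟩]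

end perm

section bij
variable {g : Type*} [LieRing g] [LieAlgebra ℝ g] {n : ℕ} (c : AlternatingMap ℝ g ℝ (Fin (n + 1)))

lemma sum_unshuffle_pairs (m' : ℕ) (v : Fin (m' + 2) → g × ℝ) :
    ∑ σ ∈ Finset.filter (fun σ : Equiv.Perm (Fin (m' + 2)) => IsUnshuffle (m' + 2) 2 σ)
        Finset.univ,
      (((Equiv.Perm.sign σ : ℤ) : ℝ)) •
        lBr n c (m' + 1)
          (Fin.cons (lBr n c 2 fun a : Fin 2 => v (σ (Fin.castLE (by omega) a)))
            (fun a : Fin m' => v (σ ⟨2 + (a : ℕ), by have := a.isLt; omega⟩)))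
    = ∑ pq ∈ Finset.filter (fun pq : Fin (m' + 2) × Fin (m' + 2) => pq.1 < pq.2) Finset.univ,
        (-(-1 : ℝ) ^ ((pq.1 : ℕ) + (pq.2 : ℕ))) •
          lBr n c (m' + 1)
            (Fin.cons (⁅(v pq.1).1, (v pq.2).1⁆, (0 : ℝ))
              (fun a => v (pq.1.succAbove ((q1 pq.2).succAbove a)))) := by
  apply Finset.sum_nbij' (fun σ => (σ 0, σ 1)) (fun pq => unsh pq.1 pq.2)
  · intro σ hσ
    simp only [Finset.mem_filter, Finset.mem_univ, true_and] at hσ ⊢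
    exact hσ.1 0 1 (by simp) (by simp [Fin.val_one])
  · intro pq hpq
    simp only [Finset.mem_filter, Finset.mem_univ, true_and] at hpq ⊢
    exact isUnshuffle_unsh _ _ hpq
  · intro σ hσ
    simp only [Finset.mem_filter, Finset.mem_univ, true_and] at hσ
    exact (unshuffle_eq_unsh σ hσ).symm
  · intro pq hpq
    simp only [Finset.mem_filter, Finset.mem_univ, true_and] at hpq
    exact Prod.ext (unsh_zero _ _) (unsh_one _ _ hpq)
  · intro σ hσ
    simp only [Finset.mem_filter, Finset.mem_univ, true_and] at hσ
    have hpq : σ 0 < σ 1 := hσ.1 0 1 (by simp) (by simp [Fin.val_one])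
    have he := unshuffle_eq_unsh σ hσ
    have hq1 : 1 ≤ ((σ 1 : Fin (m' + 2)) : ℕ) := by
      have := hpq; rw [Fin.lt_def] at this; omega
    show _ = (-(-1 : ℝ) ^ (((σ 0 : Fin (m' + 2)) : ℕ) + ((σ 1 : Fin (m' + 2)) : ℕ))) •
          lBr n c (m' + 1)
            (Fin.cons (⁅(v (σ 0)).1, (v (σ 1)).1⁆, (0 : ℝ))
              (fun a => v ((σ 0).succAbove ((q1 (σ 1)).succAbove a))))
    congr 1
    · conv_lhs => rw [he]
      rw [sign_unsh]
      simp only [Units.val_mul, Units.val_pow_eq_pow_val, Units.val_neg, Units.val_one]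
      push_cast
      rw [show ((σ 0 : Fin (m' + 2)) : ℕ) + ((σ 1 : Fin (m' + 2)) : ℕ)
          = ((σ 0 : Fin (m' + 2)) : ℕ) + (((σ 1 : Fin (m' + 2)) : ℕ) - 1) + 1 by omega,
        pow_succ, pow_add]
      ring
    · have e0 : (Fin.castLE (show 2 ≤ m' + 2 by omega) (0 : Fin 2)) = (0 : Fin (m' + 2)) := by
        ext; simp
      have e1 : (Fin.castLE (show 2 ≤ m' + 2 by omega) (1 : Fin 2)) = (1 : Fin (m' + 2)) := by
        ext; simp [Fin.val_one]
      rw [lBr_two, e0, e1]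
      congr 1
      funext a
      induction a using Fin.cases with
      | zero => simp only [Fin.cons_zero]
      | succ b =>
        simp only [Fin.cons_succ]
        have hidx : (⟨2 + (b : ℕ), by have := b.isLt; omega⟩ : Fin (m' + 2)) = b.succ.succ := by
          ext; simp only [Fin.val_succ]; omega
        conv_lhs => rw [hidx, he, unsh_two]

end bij

section branches
variable {g : Type*} [LieRing g] [LieAlgebra ℝ g] {n : ℕ}

lemma cocycle_sum (hn : 2 ≤ n) (c : AlternatingMap ℝ g ℝ (Fin (n + 1)))
    (hcocycle : ∀ x : Fin (n + 2) → g,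
      ∑ q ∈ Finset.filter (fun q : Fin (n + 2) × Fin (n + 2) => q.1 < q.2) Finset.univ,
        ((-1 : ℝ) ^ ((q.1 : ℕ) + (q.2 : ℕ))) *
          c (Fin.cons ⁅x q.1, x q.2⁆ (rm2 x q.1 q.2)) = 0)
    (v : Fin (n + 2) → g × ℝ) :
    ∑ pq ∈ Finset.filter (fun pq : Fin (n + 2) × Fin (n + 2) => pq.1 < pq.2) Finset.univ,
        (-(-1 : ℝ) ^ ((pq.1 : ℕ) + (pq.2 : ℕ))) •
          lBr n c (n + 1)
            (Fin.cons (⁅(v pq.1).1, (v pq.2).1⁆, (0 : ℝ))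
              (fun a => v (pq.1.succAbove ((q1 pq.2).succAbove a)))) = 0 := by
  set x : Fin (n + 2) → g := fun b => (v b).1 with hx
  have hterm : ∀ pq ∈ Finset.filter (fun pq : Fin (n + 2) × Fin (n + 2) => pq.1 < pq.2)
      Finset.univ,
      (-(-1 : ℝ) ^ ((pq.1 : ℕ) + (pq.2 : ℕ))) •
          lBr n c (n + 1)
            (Fin.cons (⁅(v pq.1).1, (v pq.2).1⁆, (0 : ℝ))
              (fun a => v (pq.1.succAbove ((q1 pq.2).succAbove a))))
        = ((0 : g), -((-1 : ℝ) ^ ((pq.1 : ℕ) + (pq.2 : ℕ)) *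
            c (Fin.cons ⁅x pq.1, x pq.2⁆ (rm2 x pq.1 pq.2)))) := by
    intro pq _
    rw [lBr_succ_n c (by omega)]
    have harg : (fun a : Fin (n + 1) =>
        ((Fin.cons (⁅(v pq.1).1, (v pq.2).1⁆, (0 : ℝ))
          (fun a => v (pq.1.succAbove ((q1 pq.2).succAbove a))) : Fin (n + 1) → g × ℝ) a).1)
        = Fin.cons ⁅x pq.1, x pq.2⁆ (rm2 x pq.1 pq.2) := by
      funext a
      induction a using Fin.cases with
      | zero => simp only [Fin.cons_zero]; rfl
      | succ b => simp only [Fin.cons_succ]; rfl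
    rw [harg, Prod.smul_mk, smul_zero, smul_eq_mul, neg_mul]
  rw [Finset.sum_congr rfl hterm]
  apply Prod.ext
  · rw [Prod.fst_sum]; simp
  · rw [Prod.snd_sum]
    simp only [Finset.sum_neg_distrib]
    rw [hcocycle x, neg_zero]
    rfl

lemma jacobi_sum (hn : 2 ≤ n) (c : AlternatingMap ℝ g ℝ (Fin (n + 1))) (v : Fin 3 → g × ℝ) :
    ∑ pq ∈ Finset.filter (fun pq : Fin 3 × Fin 3 => pq.1 < pq.2) Finset.univ,
        (-(-1 : ℝ) ^ ((pq.1 : ℕ) + (pq.2 : ℕ))) •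
          lBr n c 2
            (Fin.cons (⁅(v pq.1).1, (v pq.2).1⁆, (0 : ℝ))
              (fun a : Fin 1 => v (pq.1.succAbove ((q1 pq.2).succAbove a)))) = 0 := by
  have hT : Finset.filter (fun pq : Fin 3 × Fin 3 => pq.1 < pq.2) Finset.univ
      = {((0 : Fin 3), (1 : Fin 3)), ((0 : Fin 3), (2 : Fin 3)), ((1 : Fin 3), (2 : Fin 3))} := by
    decide
  rw [hT, Finset.sum_insert (by decide), Finset.sum_insert (by decide), Finset.sum_singleton]
  show (-(-1 : ℝ) ^ ((0 : ℕ) + (1 : ℕ))) • ((⁅⁅(v 0).1, (v 1).1⁆, (v 2).1⁆ : g), (0 : ℝ))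
      + ((-(-1 : ℝ) ^ ((0 : ℕ) + (2 : ℕ))) • ((⁅⁅(v 0).1, (v 2).1⁆, (v 1).1⁆ : g), (0 : ℝ))
      + (-(-1 : ℝ) ^ ((1 : ℕ) + (2 : ℕ))) • ((⁅⁅(v 1).1, (v 2).1⁆, (v 0).1⁆ : g), (0 : ℝ))) = 0
  norm_num [Prod.smul_mk]
  have key : ∀ a b d : g, ⁅a, ⁅b, d⁆⁆ - ⁅b, ⁅a, d⁆⁆ +
      (⁅d, ⁅a, b⁆⁆ - ⁅a, ⁅d, b⁆⁆ + (⁅b, ⁅d, a⁆⁆ - ⁅d, ⁅b, a⁆⁆)) = 0 := by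
    intro a b d
    have s : ∀ x y z : g, ⁅x, ⁅z, y⁆⁆ = -⁅x, ⁅y, z⁆⁆ := by
      intro x y z; rw [← lie_neg, lie_skew]
    rw [s a b d, s b a d, s d a b]
    have hj : ⁅a, ⁅b, d⁆⁆ - ⁅b, ⁅a, d⁆⁆ + ⁅d, ⁅a, b⁆⁆ = 0 := by
      rw [← lie_lie, ← lie_skew]; abel
    calc ⁅a, ⁅b, d⁆⁆ - ⁅b, ⁅a, d⁆⁆ + (⁅d, ⁅a, b⁆⁆ - -⁅a, ⁅b, d⁆⁆ + (-⁅b, ⁅a, d⁆⁆ - -⁅d, ⁅a, b⁆⁆))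
        = (⁅a, ⁅b, d⁆⁆ - ⁅b, ⁅a, d⁆⁆ + ⁅d, ⁅a, b⁆⁆)
          + (⁅a, ⁅b, d⁆⁆ - ⁅b, ⁅a, d⁆⁆ + ⁅d, ⁅a, b⁆⁆) := by abel
      _ = 0 := by rw [hj]; simp
  exact key (v 0).1 (v 1).1 (v 2).1

end branches

/-- (Baez–Crans.)  Given a Lie algebra `g` and a Chevalley–Eilenberg
`(n+1)`-cocycle `c : Λ^{n+1} g → ℝ` (with `n ≥ 2`), the graded vector space with `g` in
degree `0` and `ℝ` in degree `1-n`, with brackets `l₂ = [·,·]`, `l_{n+1} = c` on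
degree-`0` elements and all other brackets zero, is an `L_∞`-algebra: all generalized
Jacobi identities hold.  (Since `g × ℝ` has only degree-`0` and degree-`(1-n)` parts,
and every term with an input of nonzero `ℝ`-component vanishes, all Koszul signs
`ε(σ)` occurring in nonvanishing terms equal `1`, so they are omitted.) -/
theorem statement9 {g : Type*} [LieRing g] [LieAlgebra ℝ g] (n : ℕ) (hn : 2 ≤ n)
    (c : AlternatingMap ℝ g ℝ (Fin (n + 1)))
    (hcocycle : ∀ x : Fin (n + 2) → g,
      ∑ q ∈ Finset.filter (fun q : Fin (n + 2) × Fin (n + 2) => q.1 < q.2) Finset.univ,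
        ((-1 : ℝ) ^ ((q.1 : ℕ) + (q.2 : ℕ))) *
          c (Fin.cons ⁅x q.1, x q.2⁆ (rm2 x q.1 q.2)) = 0) :
    ∀ (m : ℕ), 1 ≤ m → ∀ v : Fin m → g × ℝ,
      ∑ i : Fin m,
        ∑ σ ∈ Finset.filter
            (fun σ : Equiv.Perm (Fin m) => IsUnshuffle m ((i : ℕ) + 1) σ) Finset.univ,
          (((Equiv.Perm.sign σ : ℤ) : ℝ) * (-1 : ℝ) ^ (((i : ℕ) + 1) * (m - ((i : ℕ) + 1)))) •
            lBr n c (m - ((i : ℕ) + 1) + 1)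
              (Fin.cons
                (lBr n c ((i : ℕ) + 1)
                  (fun a : Fin ((i : ℕ) + 1) =>
                    v (σ (Fin.castLE (by have := i.isLt; omega) a))))
                (fun a : Fin (m - ((i : ℕ) + 1)) =>
                  v (σ ⟨(i : ℕ) + 1 + (a : ℕ), by have h1 := a.isLt; have h2 := i.isLt; omega⟩))) = 0 := by
  intro m hm v
  rcases m with _ | _ | m'
  · omega
  · -- m = 1
    apply Finset.sum_eq_zero
    intro i _
    apply Finset.sum_eq_zero
    intro σ _
    have hi : (i : ℕ) = 0 := by have := i.isLt; omega
    rw [lBr_zero c _ (by omega) (by omega), smul_zero]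
  · -- m = m' + 2
    apply Finset.sum_eq_zero
    intro i _
    rcases i with ⟨iv, hlt⟩
    by_cases hiv : iv = 1
    · subst hiv
      show ∑ σ ∈ Finset.filter
            (fun σ : Equiv.Perm (Fin (m' + 2)) => IsUnshuffle (m' + 2) 2 σ) Finset.univ,
          (((Equiv.Perm.sign σ : ℤ) : ℝ) * (-1 : ℝ) ^ (2 * m')) •
            lBr n c (m' + 1)
              (Fin.cons
                (lBr n c 2 (fun a : Fin 2 => v (σ (Fin.castLE (by omega) a))))
                (fun a : Fin m' => v (σ ⟨2 + (a : ℕ), by have := a.isLt; omega⟩))) = 0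
      simp only [pow_mul, neg_one_sq, one_pow, mul_one]
      rw [sum_unshuffle_pairs]
      by_cases h1 : m' = 1
      · subst h1; exact jacobi_sum hn c v
      · by_cases h2 : m' = n
        · subst h2; exact cocycle_sum hn c hcocycle v
        · apply Finset.sum_eq_zero
          intro pq _
          rw [lBr_zero c (m' + 1) (by omega) (by omega), smul_zero]
    · apply Finset.sum_eq_zero
      intro σ _
      have hv : ((⟨iv, hlt⟩ : Fin (m' + 2)) : ℕ) = iv := rfl
      rw [lBr_cons_fst_zero c _ _ _ (lBr_fst c _ (by omega) _), smul_zero]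
end
end

section
/- Let $G$ act on a premultisymplectic manifold $(M,\omega)$ with fundamental vector fields $v_x$, and suppose $\mu : \mathfrak{g} \to \Omega^{n-1}(M)$ is an equivariant linear map satisfying $d\mu(x) = -\iota_{v_x}\omega$ and $\iota_{v_x}\mu(x) = 0$ for all $x$. Then $\iota_{v_x}\mu(y) = -\iota_{v_y}\mu(x)$ for all $x,y\in\mathfrak{g}$, and consequently the expression $f_k(x_1,\ldots,x_k) := \varsigma(k)\iota(v_{x_1}\wedge\cdots\wedge v_{x_{k-1}})\mu(x_k)$ is totally skew-symmetric in $x_1,\ldots,x_k$. -/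
open scoped BigOperators

section Aux

variable {M X Ω : Type*} [LieRing X] [LieAlgebra ℝ X] [AddCommGroup Ω] [Module ℝ Ω]

lemma contr_succ (C : CartanCalculus M X Ω) (k : ℕ) (v : Fin (k + 1) → X) (α : Ω) :
    C.contr (k + 1) v α = C.contr k (fun a => v a.succ) (C.ι (v 0) α) := rfl

lemma contr_neg (C : CartanCalculus M X Ω) :
    ∀ (k : ℕ) (v : Fin k → X) (α : Ω), C.contr k v (-α) = - C.contr k v α
  | 0, _, _ => rfl
  | k + 1, v, α => by
    rw [contr_succ, contr_succ, map_neg, contr_neg C k]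

lemma contr_swap (C : CartanCalculus M X Ω) :
    ∀ (k : ℕ) (v : Fin k → X) (α : Ω) (p q : Fin k), p ≠ q →
      C.contr k (fun a => v (Equiv.swap p q a)) α = - C.contr k v α := by
  intro k
  induction k with
  | zero => intro v α p q _; exact p.elim0
  | succ k IH =>
    -- Case of swaps not involving 0.
    have H1 : ∀ (v : Fin (k + 1) → X) (α : Ω) (p q : Fin (k + 1)),
        p ≠ 0 → q ≠ 0 → p ≠ q →
        C.contr (k + 1) (fun a => v (Equiv.swap p q a)) α = - C.contr (k + 1) v α := by
      intro v α p q hp hq hpq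
      obtain ⟨p', rfl⟩ := Fin.exists_succ_eq_of_ne_zero hp
      obtain ⟨q', rfl⟩ := Fin.exists_succ_eq_of_ne_zero hq
      have hpq' : p' ≠ q' := fun h => hpq (by rw [h])
      rw [contr_succ, contr_succ]
      have h0 : Equiv.swap p'.succ q'.succ 0 = 0 :=
        Equiv.swap_apply_of_ne_of_ne (Fin.succ_ne_zero p').symm (Fin.succ_ne_zero q').symm
      rw [h0]
      have hfun : (fun a : Fin k => v (Equiv.swap p'.succ q'.succ a.succ)) =
          (fun a : Fin k => (fun b : Fin k => v b.succ) (Equiv.swap p' q' a)) := by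
        funext a
        exact congrArg v ((Fin.succ_injective k).swap_apply p' q' a)
      rw [hfun]
      exact IH (fun b : Fin k => v b.succ) (C.ι (v 0) α) p' q' hpq'
    rcases k with _ | m
    · intro v α p q hpq
      exact absurd (by omega : p = q) hpq
    -- Case of the swap (0 1).
    have H2 : ∀ (v : Fin (m + 2) → X) (α : Ω),
        C.contr (m + 2) (fun a => v (Equiv.swap 0 1 a)) α = - C.contr (m + 2) v α := by
      intro v α
      have key : ∀ (w : Fin (m + 2) → X) (β : Ω), C.contr (m + 2) w β
          = C.contr m (fun a => w a.succ.succ) (C.ι (w (Fin.succ 0)) (C.ι (w 0) β)) := by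
        intro w β; rw [contr_succ, contr_succ]
      rw [key (fun a => v (Equiv.swap 0 1 a)) α, key v α, Fin.succ_zero_eq_one]
      have h1 : Equiv.swap (0 : Fin (m + 2)) 1 0 = 1 := Equiv.swap_apply_left _ _
      have h2 : Equiv.swap (0 : Fin (m + 2)) 1 1 = 0 := Equiv.swap_apply_right _ _
      rw [h1, h2]
      have hfun : (fun a : Fin m => v (Equiv.swap (0 : Fin (m + 2)) 1 a.succ.succ)) =
          (fun a : Fin m => v a.succ.succ) := by
        funext a
        have hne0 : (a.succ.succ : Fin (m + 2)) ≠ 0 := Fin.succ_ne_zero _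
        have hne1 : (a.succ.succ : Fin (m + 2)) ≠ 1 := by
          rw [← Fin.succ_zero_eq_one]
          exact fun h => Fin.succ_ne_zero a (Fin.succ_injective _ h)
        exact congrArg v (Equiv.swap_apply_of_ne_of_ne hne0 hne1)
      rw [hfun, C.ι_ι, contr_neg]
    -- Case of swaps (0 q).
    have H3 : ∀ (v : Fin (m + 2) → X) (α : Ω) (q : Fin (m + 2)), q ≠ 0 →
        C.contr (m + 2) (fun a => v (Equiv.swap 0 q a)) α = - C.contr (m + 2) v α := by
      intro v α q hq
      by_cases hq1 : q = 1
      · subst hq1; exact H2 v α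
      · have hconj : Equiv.swap (0 : Fin (m + 2)) q =
            Equiv.swap 0 1 * Equiv.swap 1 q * Equiv.swap 0 1 := by
          have h := Equiv.swap_apply_apply (Equiv.swap (0 : Fin (m + 2)) 1) 1 q
          rw [Equiv.swap_apply_right, Equiv.swap_apply_of_ne_of_ne hq hq1] at h
          rw [h, Equiv.swap_inv]
        rw [hconj]
        simp only [Equiv.Perm.mul_apply]
        rw [H2 (fun c => v (Equiv.swap 0 1 (Equiv.swap 1 q c))) α,
          H1 (fun c => v (Equiv.swap 0 1 c)) α 1 q (by
            rw [← Fin.succ_zero_eq_one]; exact Fin.succ_ne_zero _) hq (Ne.symm hq1),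
          H2 v α]
        simp only [neg_neg]
    intro v α p q hpq
    by_cases hp : p = 0
    · subst hp; exact H3 v α q (Ne.symm hpq)
    by_cases hq : q = 0
    · subst hq
      rw [Equiv.swap_comm]
      exact H3 v α p hp
    exact H1 v α p q hp hq hpq

lemma contr_F_swap (C : CartanCalculus M X Ω) {g : Type*} (f : g → X) (μ : g → Ω)
    (hskew : ∀ x y, C.ι (f x) (μ y) = - C.ι (f y) (μ x)) :
    ∀ (j : ℕ) (x : Fin (j + 1) → g) (a b : Fin (j + 1)), a ≠ b →
      C.contr j (fun c => f (x (Equiv.swap a b c.castSucc)))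
          (μ (x (Equiv.swap a b (Fin.last j)))) =
        - C.contr j (fun c => f (x c.castSucc)) (μ (x (Fin.last j))) := by
  intro j
  rcases j with _ | k
  · intro x a b hab; exact absurd (by omega : a = b) hab
  -- swaps inside the castSucc range
  have Hin : ∀ (x : Fin (k + 2) → g) (a b : Fin (k + 2)),
      a ≠ Fin.last (k + 1) → b ≠ Fin.last (k + 1) → a ≠ b →
      C.contr (k + 1) (fun c => f (x (Equiv.swap a b c.castSucc)))
          (μ (x (Equiv.swap a b (Fin.last (k + 1))))) =
        - C.contr (k + 1) (fun c => f (x c.castSucc)) (μ (x (Fin.last (k + 1)))) := by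
    intro x a b ha hb hab
    obtain ⟨a', rfl⟩ := Fin.exists_castSucc_eq.mpr ha
    obtain ⟨b', rfl⟩ := Fin.exists_castSucc_eq.mpr hb
    have hab' : a' ≠ b' := fun h => hab (by rw [h])
    have hlast : Equiv.swap a'.castSucc b'.castSucc (Fin.last (k + 1)) = Fin.last (k + 1) :=
      Equiv.swap_apply_of_ne_of_ne (Fin.castSucc_lt_last a').ne' (Fin.castSucc_lt_last b').ne'
    rw [hlast]
    have hfun : (fun c : Fin (k + 1) =>
          f (x (Equiv.swap a'.castSucc b'.castSucc c.castSucc))) =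
        (fun c : Fin (k + 1) =>
          (fun d : Fin (k + 1) => f (x d.castSucc)) (Equiv.swap a' b' c)) := by
      funext c
      exact congrArg (fun i => f (x i)) ((Fin.castSucc_injective (k + 1)).swap_apply a' b' c)
    rw [hfun]
    exact contr_swap C (k + 1) (fun d : Fin (k + 1) => f (x d.castSucc))
      (μ (x (Fin.last (k + 1)))) a' b' hab'
  -- the swap (0, last)
  have H0last : ∀ (x : Fin (k + 2) → g),
      C.contr (k + 1) (fun c => f (x (Equiv.swap 0 (Fin.last (k + 1)) c.castSucc)))
          (μ (x (Equiv.swap 0 (Fin.last (k + 1)) (Fin.last (k + 1))))) =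
        - C.contr (k + 1) (fun c => f (x c.castSucc)) (μ (x (Fin.last (k + 1)))) := by
    intro x
    rw [contr_succ, contr_succ, Fin.castSucc_zero]
    have h1 : Equiv.swap (0 : Fin (k + 2)) (Fin.last (k + 1)) 0 = Fin.last (k + 1) :=
      Equiv.swap_apply_left _ _
    have h2 : Equiv.swap (0 : Fin (k + 2)) (Fin.last (k + 1)) (Fin.last (k + 1)) = 0 :=
      Equiv.swap_apply_right _ _
    rw [h1, h2]
    have hfun : (fun a : Fin k =>
          f (x (Equiv.swap (0 : Fin (k + 2)) (Fin.last (k + 1)) a.succ.castSucc))) =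
        (fun a : Fin k => f (x a.succ.castSucc)) := by
      funext a
      have hne0 : (a.succ.castSucc : Fin (k + 2)) ≠ 0 := by
        simp [Fin.ext_iff]
      have hnelast : (a.succ.castSucc : Fin (k + 2)) ≠ Fin.last (k + 1) :=
        (Fin.castSucc_lt_last _).ne
      exact congrArg (fun i => f (x i)) (Equiv.swap_apply_of_ne_of_ne hne0 hnelast)
    rw [hfun, hskew (x (Fin.last (k + 1))) (x 0), contr_neg]
  -- swaps (a, last) with a ≠ 0
  have Hlast : ∀ (x : Fin (k + 2) → g) (a : Fin (k + 2)),
      a ≠ Fin.last (k + 1) → a ≠ 0 →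
      C.contr (k + 1) (fun c => f (x (Equiv.swap a (Fin.last (k + 1)) c.castSucc)))
          (μ (x (Equiv.swap a (Fin.last (k + 1)) (Fin.last (k + 1))))) =
        - C.contr (k + 1) (fun c => f (x c.castSucc)) (μ (x (Fin.last (k + 1)))) := by
    intro x a ha h0
    have h0last : (0 : Fin (k + 2)) ≠ Fin.last (k + 1) := by
      simp [Fin.ext_iff, Fin.last]
    have hconj : Equiv.swap a (Fin.last (k + 1)) =
        Equiv.swap 0 a * Equiv.swap 0 (Fin.last (k + 1)) * Equiv.swap 0 a := by
      have h := Equiv.swap_apply_apply (Equiv.swap (0 : Fin (k + 2)) a) 0 (Fin.last (k + 1))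
      rw [Equiv.swap_apply_left, Equiv.swap_apply_of_ne_of_ne h0last.symm (Ne.symm ha)] at h
      rw [h, Equiv.swap_inv]
    have key : ∀ (y : Fin (k + 2) → g),
        C.contr (k + 1) (fun c => f (y (Equiv.swap 0 a c.castSucc)))
            (μ (y (Equiv.swap 0 a (Fin.last (k + 1))))) =
          - C.contr (k + 1) (fun c => f (y c.castSucc)) (μ (y (Fin.last (k + 1)))) := by
      intro y
      exact Hin y 0 a h0last ha (Ne.symm h0)
    rw [hconj]
    simp only [Equiv.Perm.mul_apply]
    rw [key (fun i => x (Equiv.swap 0 a (Equiv.swap 0 (Fin.last (k + 1)) i))),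
      H0last (fun i => x (Equiv.swap 0 a i)), key x]
    simp only [neg_neg]
  intro x a b hab
  by_cases hb : b = Fin.last (k + 1)
  · subst hb
    by_cases h0 : a = 0
    · subst h0; exact H0last x
    · exact Hlast x a hab h0
  by_cases ha : a = Fin.last (k + 1)
  · subst ha
    rw [Equiv.swap_comm]
    by_cases h0 : b = 0
    · subst h0; exact H0last x
    · exact Hlast x b hb h0
  exact Hin x a b ha hb hab

lemma contr_F_perm (C : CartanCalculus M X Ω) {g : Type*} (f : g → X) (μ : g → Ω)
    (hskew : ∀ x y, C.ι (f x) (μ y) = - C.ι (f y) (μ x)) (j : ℕ)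
    (σ : Equiv.Perm (Fin (j + 1))) :
    ∀ (x : Fin (j + 1) → g),
      C.contr j (fun a => f (x (σ a.castSucc))) (μ (x (σ (Fin.last j)))) =
        ((Equiv.Perm.sign σ : ℤ) : ℝ) •
          C.contr j (fun a => f (x a.castSucc)) (μ (x (Fin.last j))) := by
  refine Equiv.Perm.swap_induction_on σ ?_ ?_
  · intro x; simp
  · intro π a b hab IH x
    simp only [Equiv.Perm.mul_apply]
    have step1 := IH (fun i => x (Equiv.swap a b i))
    rw [step1, contr_F_swap C f μ hskew j x a b hab]
    rw [smul_neg]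
    have hsign : ((Equiv.Perm.sign (Equiv.swap a b * π) : ℤ) : ℝ) =
        - ((Equiv.Perm.sign π : ℤ) : ℝ) := by
      rw [Equiv.Perm.sign_mul, Equiv.Perm.sign_swap hab]
      push_cast
      ring
    rw [hsign, neg_smul]

end Aux

/-- Let `G` act on a premultisymplectic manifold `(M, ω)` with
fundamental vector fields `v_x = ρ x`, and let `μ : 𝔤 → Ω^{n-1}(M)` be equivariant
with `d μ(x) = - ι_{v_x} ω` and `ι_{v_x} μ(x) = 0`.  Then
`ι_{v_x} μ(y) = - ι_{v_y} μ(x)`, and consequently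
`f_k(x₁,…,x_k) = ς(k) ι(v_{x₁} ∧ ⋯ ∧ v_{x_{k-1}}) μ(x_k)` is totally skew-symmetric
(written with `k = j + 1`). -/
theorem statement11 {M X Ω g : Type*} [LieRing X] [LieAlgebra ℝ X]
    [AddCommGroup Ω] [Module ℝ Ω] [LieRing g] [LieAlgebra ℝ g]
    (C : CartanCalculus M X Ω) (n : ℕ)
    (ω : Ω) (hω : ω ∈ C.grade ((n : ℤ) + 1)) (hclosed : C.d ω = 0)
    (ρ : g →ₗ⁅ℝ⁆ X) (hpres : ∀ x, C.lie (ρ x) ω = 0)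
    (μ : g →ₗ[ℝ] Ω) (hgrade : ∀ x, μ x ∈ C.grade ((n : ℤ) - 1))
    (hequiv : ∀ x y, C.lie (ρ x) (μ y) = μ ⁅x, y⁆)
    (hham : ∀ x, C.d (μ x) = - C.ι (ρ x) ω)
    (hiso : ∀ x, C.ι (ρ x) (μ x) = 0) :
    (∀ x y : g, C.ι (ρ x) (μ y) = - C.ι (ρ y) (μ x)) ∧
    (∀ (j : ℕ) (x : Fin (j + 1) → g) (σ : Equiv.Perm (Fin (j + 1))),
      sigmaSign (j + 1) •
          C.contr j (fun a => ρ (x (σ a.castSucc))) (μ (x (σ (Fin.last j)))) =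
        ((Equiv.Perm.sign σ : ℤ) : ℝ) •
          (sigmaSign (j + 1) •
            C.contr j (fun a => ρ (x a.castSucc)) (μ (x (Fin.last j))))) := by
  have hskew : ∀ x y : g, C.ι (ρ x) (μ y) = - C.ι (ρ y) (μ x) := by
    intro x y
    have h := hiso (x + y)
    rw [map_add ρ, map_add, map_add] at h
    simp only [LinearMap.add_apply, map_add, hiso x, hiso y, zero_add, add_zero] at h
    exact eq_neg_of_add_eq_zero_right h
  refine ⟨hskew, ?_⟩
  intro j x σ
  rw [contr_F_perm C (fun z => ρ z) (fun z => μ z) hskew j σ x, smul_comm]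
end

section
/- Let $\mathfrak{su}(2)$ have the basis $e_1, e_2, e_3$ of half-Pauli matrices satisfying $e_i e_j = -\tfrac{1}{4}\delta_{ij} I + \tfrac{1}{2}\sum_k \varepsilon_{ijk} e_k$. Then for every $n \geq 0$ the symmetrized invariant polynomial $q_{2(n+1)}(x_1,\ldots,x_{2n+2}) = -\tfrac{1}{(2n+2)!}\sum_{\sigma} \mathrm{Re}\,\mathrm{Tr}(x_{\sigma(1)}\cdots x_{\sigma(2n+2)})$ is non-degenerate: if $x\in\mathfrak{su}(2)$ satisfies $q_{2(n+1)}(x,y_1,\ldots,y_{2n+1})=0$ for all $y_i\in\mathfrak{su}(2)$, then $x = 0$. Moreover $q_3 = 0$. -/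
noncomputable section

/-- The Lie algebra `su(2)`: traceless skew-adjoint `2 × 2` complex matrices. -/
def su2 : Set (Matrix (Fin 2) (Fin 2) ℂ) :=
  {x | x.conjTranspose = -x ∧ x.trace = 0}

/-- The symmetrized invariant polynomial
`q_k(x₁,…,x_k) = -(1/k!) ∑_{σ ∈ S_k} Re Tr (x_{σ(1)} ⋯ x_{σ(k)})`. -/
def qk (k : ℕ) (x : Fin k → Matrix (Fin 2) (Fin 2) ℂ) : ℝ :=
  -(1 / (k.factorial : ℝ)) *
    ∑ σ : Equiv.Perm (Fin k), ((List.ofFn fun i => x (σ i)).prod.trace).re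

/-- The half-Pauli basis element `e₁` of `su(2)`. -/
def e1 : Matrix (Fin 2) (Fin 2) ℂ := !![0, 1/2; -(1/2), 0]
/-- The half-Pauli basis element `e₂` of `su(2)`. -/
def e2 : Matrix (Fin 2) (Fin 2) ℂ := !![0, Complex.I/2; Complex.I/2, 0]
/-- The half-Pauli basis element `e₃` of `su(2)`. -/
def e3 : Matrix (Fin 2) (Fin 2) ℂ := !![Complex.I/2, 0; 0, -(Complex.I/2)]


abbrev M2 := Matrix (Fin 2) (Fin 2) ℂ

lemma ofFn_ite (x e : M2) :
    ∀ (k m : ℕ), m < k →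
      (List.ofFn (fun i : Fin k => if (i : ℕ) = m then x else e)) =
        List.replicate m e ++ x :: List.replicate (k - 1 - m) e := by
  intro k
  induction k with
  | zero => intro m h; omega
  | succ k ih =>
    intro m h
    rw [List.ofFn_succ]
    cases m with
    | zero =>
      simp [List.ofFn_const]
    | succ m =>
      have hm : m < k := by omega
      have hk : k + 1 - 1 - (m + 1) = k - 1 - m := by omega
      rw [hk]
      have htail : (List.ofFn fun i : Fin k =>
          if ((i.succ : Fin (k+1)) : ℕ) = m + 1 then x else e) =
          List.replicate m e ++ x :: List.replicate (k - 1 - m) e := by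
        rw [← ih m hm]
        congr 1
        funext i
        simp [Fin.val_succ]
      rw [if_neg (by simp), htail]
      rfl

lemma trace_rep (x e : M2) (m p : ℕ) :
    ((List.replicate m e ++ x :: List.replicate p e).prod).trace = (x * e ^ (m + p)).trace := by
  rw [List.prod_append, List.prod_cons, List.prod_replicate, List.prod_replicate,
    Matrix.trace_mul_comm, mul_assoc, ← pow_add, add_comm p m]

lemma trace_perm (n : ℕ) (x e : M2) (σ : Equiv.Perm (Fin (2 * n + 2))) :
    ((List.ofFn fun i => (Fin.cons x (fun _ => e) : Fin (2*n+1+1) → M2) (σ i)).prod).trace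
      = (x * e ^ (2 * n + 1)).trace := by
  have hfun : (fun i : Fin (2*n+2) => (Fin.cons x (fun _ => e) : Fin (2*n+1+1) → M2) (σ i))
      = fun i : Fin (2*n+2) => if (i : ℕ) = ((σ.symm 0 : Fin (2*n+2)) : ℕ) then x else e := by
    funext i
    by_cases h : i = σ.symm 0
    · subst h; simp
    · have h1 : σ i ≠ 0 := by
        intro hc
        exact h (by rw [← hc]; simp)
      rw [if_neg (fun hc => h (Fin.val_injective hc))]
      obtain ⟨j, hj⟩ := Fin.eq_succ_of_ne_zero h1
      rw [hj, Fin.cons_succ]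
  rw [hfun]
  have hlt : ((σ.symm 0 : Fin (2*n+2)) : ℕ) < 2*n+2 := Fin.is_lt _
  rw [ofFn_ite x e (2*n+2) _ hlt, trace_rep]
  have h2 : ((σ.symm 0 : Fin (2*n+2)) : ℕ) + (2*n+2-1 - ((σ.symm 0 : Fin (2*n+2)) : ℕ)) = 2*n+1 := by omega
  rw [h2]

lemma qk_cons (n : ℕ) (x e : M2) :
    qk (2 * n + 2) (Fin.cons x fun _ => e) = -(((x * e ^ (2 * n + 1)).trace).re) := by
  unfold qk
  rw [Finset.sum_congr rfl (fun σ _ => by rw [trace_perm n x e σ])]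
  rw [Finset.sum_const, Finset.card_univ, Fintype.card_perm, Fintype.card_fin,
    nsmul_eq_mul]
  have hk : (((2*n+2).factorial : ℝ)) ≠ 0 := Nat.cast_ne_zero.mpr (Nat.factorial_ne_zero _)
  field_simp

end
noncomputable section
lemma e1_mem : e1 ∈ su2 := by
  constructor
  · ext i j; fin_cases i <;> fin_cases j <;>
      simp [e1, Matrix.conjTranspose_apply, Complex.ext_iff] <;> norm_num
  · simp [e1, Matrix.trace_fin_two]

lemma e2_mem : e2 ∈ su2 := by
  constructor
  · ext i j; fin_cases i <;> fin_cases j <;>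
      simp [e2, Matrix.conjTranspose_apply, Complex.ext_iff] <;> norm_num
  · simp [e2, Matrix.trace_fin_two]

lemma e3_mem : e3 ∈ su2 := by
  constructor
  · ext i j; fin_cases i <;> fin_cases j <;>
      simp [e3, Matrix.conjTranspose_apply, Complex.ext_iff] <;> norm_num
  · simp [e3, Matrix.trace_fin_two]

lemma e1_sq : e1 ^ 2 = (-(1/4) : ℂ) • 1 := by
  rw [pow_two, Matrix.one_fin_two]
  simp [e1, Matrix.mul_fin_two, Matrix.smul_of, Matrix.smul_cons]
  norm_num [Matrix.smul_empty]

lemma e2_sq : e2 ^ 2 = (-(1/4) : ℂ) • 1 := by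
  rw [pow_two, Matrix.one_fin_two]
  simp [e2, Matrix.mul_fin_two]
  rw [div_mul_div_comm, Complex.I_mul_I]; norm_num

lemma e3_sq : e3 ^ 2 = (-(1/4) : ℂ) • 1 := by
  rw [pow_two, Matrix.one_fin_two]
  ext i j; fin_cases i <;> fin_cases j <;> simp [e3, Matrix.mul_apply, Fin.sum_univ_two, Complex.ext_iff] <;> ring_nf <;>
    simp [Complex.I_sq, Complex.ext_iff] <;> ring
end
noncomputable section
lemma re_trace_eq_zero (n : ℕ) (x e : M2) (he : e ^ 2 = (-(1/4) : ℂ) • 1)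
    (h : qk (2*n+2) (Fin.cons x fun _ : Fin (2*n+1) => e) = 0) : ((x * e).trace).re = 0 := by
  rw [qk_cons] at h
  have hpow : e ^ (2*n+1) = ((-(1/4) : ℂ)^n) • e := by
    have h2 : e ^ (2*n+1) = (e^2)^n * e := by
      rw [← pow_mul, ← pow_succ]
    rw [h2, he, smul_pow, one_pow, smul_mul_assoc, one_mul]
  rw [hpow, mul_smul_comm, Matrix.trace_smul] at h
  have hc : ((-(1/4) : ℂ))^n = (((-(1/4):ℝ))^n : ℝ) := by push_cast; ring
  rw [hc, smul_eq_mul, Complex.re_ofReal_mul] at h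
  have hne : ((-(1/4):ℝ))^n ≠ 0 := pow_ne_zero _ (by norm_num)
  have := neg_eq_zero.mp h
  exact (mul_eq_zero.mp this).resolve_left hne

lemma su2_entries_zero (x : M2) (hx : x ∈ su2)
    (h1 : ((x * e1).trace).re = 0) (h2 : ((x * e2).trace).re = 0)
    (h3 : ((x * e3).trace).re = 0) : x = 0 := by
  obtain ⟨hsk, htr⟩ := hx
  have ha := congrFun (congrFun hsk 0) 0
  have hb := congrFun (congrFun hsk 0) 1
  have hd := congrFun (congrFun hsk 1) 1
  rw [Matrix.trace_fin_two] at htr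
  rw [Matrix.trace_fin_two, Matrix.mul_apply, Matrix.mul_apply, Fin.sum_univ_two] at h1 h2 h3
  simp [e1, e2, e3, Matrix.conjTranspose_apply, Complex.ext_iff] at ha hb hd htr h1 h2 h3
  ext i j
  fin_cases i <;> fin_cases j <;> simp [Complex.ext_iff] <;> constructor <;> linarith
end
noncomputable section
lemma ofFn3 (f : Fin 3 → M2) : (List.ofFn f).prod = f 0 * (f 1 * f 2) := by
  simp [List.ofFn_succ]

lemma q3_zero (x : Fin 3 → M2) (hx : ∀ i, x i ∈ su2) : qk 3 x = 0 := by
  have key : ∀ σ : Equiv.Perm (Fin 3),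
      ((List.ofFn fun i => x ((σ * Equiv.swap (0:Fin 3) 2) i)).prod.trace).re
        = -((List.ofFn fun i => x (σ i)).prod.trace).re := by
    intro σ
    have h0 := (hx (σ 0)).1
    have h1 := (hx (σ 1)).1
    have h2 := (hx (σ 2)).1
    rw [ofFn3, ofFn3]
    simp only [Equiv.Perm.mul_apply, Equiv.swap_apply_left, Equiv.swap_apply_right,
      Equiv.swap_apply_of_ne_of_ne (show (1:Fin 3) ≠ 0 by decide) (show (1:Fin 3) ≠ 2 by decide)]
    have hrev : x (σ 2) * (x (σ 1) * x (σ 0)) = -(Matrix.conjTranspose (x (σ 0) * (x (σ 1) * x (σ 2)))) := by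
      rw [Matrix.conjTranspose_mul, Matrix.conjTranspose_mul, h0, h1, h2]
      noncomm_ring
    rw [hrev, Matrix.trace_neg, Matrix.trace_conjTranspose]
    simp
  have hsum : ∑ σ : Equiv.Perm (Fin 3), ((List.ofFn fun i => x (σ i)).prod.trace).re = 0 := by
    have h2 := Equiv.sum_comp (Equiv.mulRight (Equiv.swap (0:Fin 3) 2))
        (fun σ : Equiv.Perm (Fin 3) => ((List.ofFn fun i => x (σ i)).prod.trace).re)
    simp only [Equiv.coe_mulRight] at h2
    rw [Finset.sum_congr rfl (fun σ _ => key σ), Finset.sum_neg_distrib] at h2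
    linarith
  unfold qk
  rw [hsum, mul_zero]
end

noncomputable section
/-- For `su(2)` (with its half-Pauli basis `e₁, e₂, e₃` satisfying
`eᵢeⱼ = -(1/4)δᵢⱼ I + (1/2)∑ₖ εᵢⱼₖ eₖ`), every even symmetrized trace polynomial
`q_{2(n+1)}` is non-degenerate: if `x ∈ su(2)` satisfies
`q_{2(n+1)}(x, y₁, …, y_{2n+1}) = 0` for all `yᵢ ∈ su(2)`, then `x = 0`.
Moreover `q₃ = 0` on `su(2)`. -/
theorem statement13 :
    (∀ n : ℕ, ∀ x ∈ su2,
      (∀ y : Fin (2 * n + 1) → Matrix (Fin 2) (Fin 2) ℂ, (∀ i, y i ∈ su2) →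
        qk (2 * n + 2) (Fin.cons x y) = 0) → x = 0) ∧
    (∀ x : Fin 3 → Matrix (Fin 2) (Fin 2) ℂ, (∀ i, x i ∈ su2) → qk 3 x = 0) := by
  constructor
  · intro n x hx hy
    have h1 : ((x * e1).trace).re = 0 :=
      re_trace_eq_zero n x e1 e1_sq (hy (fun _ => e1) (fun _ => e1_mem))
    have h2 : ((x * e2).trace).re = 0 :=
      re_trace_eq_zero n x e2 e2_sq (hy (fun _ => e2) (fun _ => e2_mem))
    have h3 : ((x * e3).trace).re = 0 :=
      re_trace_eq_zero n x e3 e3_sq (hy (fun _ => e3) (fun _ => e3_mem))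
    exact su2_entries_zero x hx h1 h2 h3
  · exact q3_zero

end
end
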